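/- arXiv:1507.06100 — 6 statements merged into one kernel-verified Lean document; each statement's English description precedes it below -/
import Mathlib

section
/- There is an absolute constant C such that for every real ν ≥ 0 and every r > 0, |(sin(νπ)/π) · ∫_0^∞ e^{-(r·sinh(s) + ν s)} ds| ≤ C · (r + ν)^{-1}. -/
open MeasureTheory Real

/-!
Since `sinh s ≥ s` for `s ≥ 0`, the integrand is dominated by `e^{-(r + ν) s}`, whose integral over
`(0, ∞)` is `(r + ν)⁻¹`; the prefactor satisfies `|sin (ν π) / π| ≤ 1 / π < 1`. So `C = 1` works.
-/

theorem abs_sin_div_pi_le_one (x : ℝ) : |sin x / π| ≤ 1 := by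
  rw [abs_div, abs_of_pos pi_pos, div_le_one pi_pos]
  linarith [abs_sin_le_one x, pi_gt_three]

theorem integral_exp_neg_mul_Ioi_zero {b : ℝ} (hb : 0 < b) :
    ∫ s in Set.Ioi (0 : ℝ), exp (-b * s) = b⁻¹ := by
  rw [integral_exp_mul_Ioi (by linarith) 0]
  field_simp
  simp

theorem integral_exp_neg_sinh_le {r ν : ℝ} (hr : 0 ≤ r) (hrν : 0 < r + ν) :
    ∫ s in Set.Ioi (0 : ℝ), exp (-(r * sinh s + ν * s)) ≤ (r + ν)⁻¹ := by
  rw [← integral_exp_neg_mul_Ioi_zero hrν]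
  refine integral_mono_of_nonneg (.of_forall fun _ => (exp_pos _).le)
    (integrableOn_exp_mul_Ioi (by linarith) 0) ?_
  filter_upwards [ae_restrict_mem measurableSet_Ioi] with s (hs : 0 < s)
  have : s ≤ sinh s := self_le_sinh_iff.2 hs.le
  gcongr exp ?_
  nlinarith

/-- Bound on the error term in Schläfli's integral representation (estimate (2.10)):
`|sin(νπ)/π ∫_0^∞ e^{-(r sinh s + ν s)} ds| ≤ C (r+ν)⁻¹`. -/
theorem schlafli_error_bound :
    ∃ C : ℝ, 0 < C ∧ ∀ ν r : ℝ, 0 ≤ ν → 0 < r →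
      |Real.sin (ν * π) / π *
          ∫ s in Set.Ioi (0 : ℝ), Real.exp (-(r * Real.sinh s + ν * s))|
        ≤ C * (r + ν)⁻¹ := by
  refine ⟨1, one_pos, fun ν r hν hr => ?_⟩
  have hI_nonneg : 0 ≤ ∫ s in Set.Ioi (0 : ℝ), exp (-(r * sinh s + ν * s)) :=
    setIntegral_nonneg measurableSet_Ioi fun _ _ => (exp_pos _).le
  rw [abs_mul, abs_of_nonneg hI_nonneg]
  exact mul_le_mul (abs_sin_div_pi_le_one _) (integral_exp_neg_sinh_le hr.le (by linarith))
    hI_nonneg zero_le_one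
end

section
/- There exist constants C > 0, c > 0 and ν₀ ≥ 1 such that for every real ν ≥ ν₀ and every r with 0 < r ≤ ν/2, one has |J_ν(r)| ≤ C e^{-c(ν + r)}. -/
open MeasureTheory Real

/-- The Bessel function of order `ν > -1/2`:
`J_ν(r) = ((r/2)^ν / (Γ(ν+1/2) Γ(1/2))) ∫_{-1}^1 e^{isr} (1-s²)^{ν-1/2} ds`. -/
noncomputable def besselJ (ν r : ℝ) : ℂ :=
  (((r / 2) ^ ν / (Real.Gamma (ν + 1 / 2) * Real.Gamma (1 / 2)) : ℝ) : ℂ) *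
    ∫ s in (-1 : ℝ)..1,
      Complex.exp (Complex.I * (s : ℂ) * (r : ℂ)) * (((1 - s ^ 2) ^ (ν - 1 / 2) : ℝ) : ℂ)

/-!
Since the weight `(1 - s²)^(ν - 1/2)` and the phase `e^{isr}` are bounded by `1` on `[-1, 1]`,
`|J_ν(r)| ≤ 2 (r/2)^ν / Γ(ν + 1/2)`. For `r ≤ ν/2` the numerator is at most `(ν/4)^ν`, while the
elementary bound `Γ(x) ≥ x^(x-2) e^{-x}` (from `Γ(m+1) = m! ≥ x^m e^{-x}` with `m = ⌊x - 1⌋`)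
controls the denominator, leaving `|J_ν(r)| ≤ 2 ν² (e/4)^ν`. As `e < 4`, this decays
exponentially in `ν`, hence in `ν + r ≤ 3ν/2`.
-/

open scoped Interval

theorem Real.rpow_sub_two_mul_exp_neg_le_Gamma {x : ℝ} (hx : 2 ≤ x) :
    x ^ (x - 2) * exp (-x) ≤ Gamma x := by
  set m := ⌊x - 1⌋₊
  have hm_le : (m : ℝ) ≤ x - 1 := Nat.floor_le (by linarith)
  have hm_gt : x - 1 < m + 1 := Nat.lt_floor_add_one _
  have hm_two : (2 : ℝ) ≤ m + 1 := by
    have hm_one : 1 ≤ m := Nat.le_floor (by norm_num; linarith)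
    exact_mod_cast Nat.succ_le_succ hm_one
  have hGamma_mono : Gamma (m + 1) ≤ Gamma x :=
    Gamma_strictMonoOn_Ici.monotoneOn hm_two (Set.mem_Ici.2 hx) (by linarith)
  have hfactorial : x ^ m * exp (-x) ≤ m.factorial := by
    have h := pow_div_factorial_le_exp _ (by linarith : (0 : ℝ) ≤ x) m
    rw [div_le_iff₀ (by positivity)] at h
    rw [exp_neg, ← div_eq_mul_inv, div_le_iff₀ (exp_pos x), mul_comm]
    exact h
  have hpow : x ^ (x - 2) ≤ x ^ m := by
    rw [← rpow_natCast]
    exact rpow_le_rpow_of_exponent_le (by linarith) (by linarith)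
  calc x ^ (x - 2) * exp (-x) ≤ x ^ m * exp (-x) := by gcongr
    _ ≤ m.factorial := hfactorial
    _ = Gamma (m + 1) := (Gamma_nat_eq_factorial m).symm
    _ ≤ Gamma x := hGamma_mono

theorem norm_besselJ_integral_le_two {ν : ℝ} (hν : 1 / 2 ≤ ν) (r : ℝ) :
    ‖∫ s in (-1 : ℝ)..1,
      Complex.exp (Complex.I * (s : ℂ) * (r : ℂ)) * (((1 - s ^ 2) ^ (ν - 1 / 2) : ℝ) : ℂ)‖ ≤ 2 := by
  have hbound : ∀ s ∈ Ι (-1 : ℝ) 1,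
      ‖Complex.exp (Complex.I * (s : ℂ) * (r : ℂ)) * (((1 - s ^ 2) ^ (ν - 1 / 2) : ℝ) : ℂ)‖ ≤ 1 := by
    intro s hs
    rw [Set.uIoc_of_le (by norm_num)] at hs
    have hweight : 0 ≤ 1 - s ^ 2 := by nlinarith [hs.1, hs.2]
    have hphase : ‖Complex.exp (Complex.I * (s : ℂ) * (r : ℂ))‖ = 1 := by
      rw [Complex.norm_exp]
      simp [mul_comm]
    rw [norm_mul, hphase, one_mul, Complex.norm_real, norm_of_nonneg (rpow_nonneg hweight _)]
    exact rpow_le_one hweight (by nlinarith) (by linarith)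
  have h := intervalIntegral.norm_integral_le_of_norm_le_const hbound
  norm_num at h
  linarith

theorem norm_besselJ_le {ν r : ℝ} (hν : 1 / 2 ≤ ν) (hr : 0 ≤ r) :
    ‖besselJ ν r‖ ≤ 2 * (r / 2) ^ ν / Gamma (ν + 1 / 2) := by
  have hGamma_pos : 0 < Gamma (ν + 1 / 2) := Gamma_pos_of_pos (by linarith)
  have hGamma_half : 1 ≤ Gamma (1 / 2) := by
    rw [Gamma_one_half_eq]
    exact one_le_sqrt.2 (by linarith [pi_gt_three])
  have hprefactor : 0 ≤ (r / 2) ^ ν / (Gamma (ν + 1 / 2) * Gamma (1 / 2)) := by positivity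
  rw [besselJ, norm_mul, Complex.norm_real, norm_of_nonneg hprefactor]
  calc (r / 2) ^ ν / (Gamma (ν + 1 / 2) * Gamma (1 / 2)) * _
      ≤ (r / 2) ^ ν / (Gamma (ν + 1 / 2) * Gamma (1 / 2)) * 2 :=
        mul_le_mul_of_nonneg_left (norm_besselJ_integral_le_two hν r) hprefactor
    _ ≤ (r / 2) ^ ν / Gamma (ν + 1 / 2) * 2 := by
        gcongr
        exact le_mul_of_one_le_right hGamma_pos.le hGamma_half
    _ = 2 * (r / 2) ^ ν / Gamma (ν + 1 / 2) := by ring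

theorem norm_besselJ_le_of_le_half {ν r : ℝ} (hν : 2 ≤ ν) (hr : 0 ≤ r) (hrν : r ≤ ν / 2) :
    ‖besselJ ν r‖ ≤ 2 * ν ^ 2 * exp ((1 - log 4) * ν) := by
  have hν_pos : 0 < ν := by linarith
  have hGamma : ν ^ (ν - 2) * exp (-ν) ≤ Gamma (ν + 1 / 2) :=
    (rpow_sub_two_mul_exp_neg_le_Gamma hν).trans <|
      Gamma_strictMonoOn_Ici.monotoneOn (Set.mem_Ici.2 hν) (Set.mem_Ici.2 (by linarith))
        (by linarith)
  have hnumerator : (r / 2) ^ ν ≤ ν ^ ν / exp (log 4 * ν) := by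
    rw [← rpow_def_of_pos (by norm_num), ← div_rpow hν_pos.le (by norm_num)]
    exact rpow_le_rpow (by positivity) (by linarith) hν_pos.le
  have hsplit : ν ^ ν = ν ^ 2 * ν ^ (ν - 2) := by
    rw [← rpow_two, ← rpow_add hν_pos]
    ring_nf
  calc ‖besselJ ν r‖ ≤ 2 * (r / 2) ^ ν / Gamma (ν + 1 / 2) := norm_besselJ_le (by linarith) hr
    _ ≤ 2 * (ν ^ ν / exp (log 4 * ν)) / (ν ^ (ν - 2) * exp (-ν)) := by gcongr
    _ = 2 * ν ^ 2 * exp ((1 - log 4) * ν) := by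
        rw [hsplit, sub_mul, one_mul, exp_sub, exp_neg]
        field_simp

/-- Exponential decay of the Bessel function below the turning point (Lemma 2.1, (2.11)):
for `ν` large and `0 < r ≤ ν/2`, `|J_ν(r)| ≤ C e^{-c(ν+r)}`. -/
theorem besselJ_exponential_decay :
    ∃ C c ν₀ : ℝ, 0 < C ∧ 0 < c ∧ 1 ≤ ν₀ ∧
      ∀ ν r : ℝ, ν₀ ≤ ν → 0 < r → r ≤ ν / 2 →
        ‖besselJ ν r‖ ≤ C * Real.exp (-c * (ν + r)) := by
  refine ⟨400, 1 / 10, 2, by norm_num, by norm_num, by norm_num, fun ν r hν hr hrν => ?_⟩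
  have hsq : ν ^ 2 ≤ 200 * exp (ν / 10) := by
    have h := pow_div_factorial_le_exp _ (by linarith : (0 : ℝ) ≤ ν / 10) 2
    norm_num at h
    linarith
  have hrate : (1 / 10 + (1 - log 4)) * ν ≤ -(1 / 10) * (ν + r) := by
    have hlog4 : log 4 = 2 * log 2 := by
      rw [show (4 : ℝ) = 2 ^ 2 by norm_num, log_pow, Nat.cast_ofNat]
    nlinarith [log_two_gt_d9]
  calc ‖besselJ ν r‖ ≤ 2 * ν ^ 2 * exp ((1 - log 4) * ν) :=
        norm_besselJ_le_of_le_half hν hr.le hrν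
    _ ≤ 2 * (200 * exp (ν / 10)) * exp ((1 - log 4) * ν) := by gcongr
    _ = 400 * exp ((1 / 10 + (1 - log 4)) * ν) := by rw [add_mul, exp_add]; ring_nf
    _ ≤ 400 * exp (-(1 / 10) * (ν + r)) := by gcongr
end

section
/- There is an absolute constant C such that for every real ν ≥ 0 and every r > 0 with r ≥ 2ν, there exist complex numbers a = a(ν,r) and E = E(ν,r) with |a| ≤ C and |E| ≤ C r^{-1} such that ∫_0^π e^{i(r sin θ - ν θ)} dθ = a · r^{-1/2} e^{-i r} + E. -/
/-!
The phase `r sin θ - ν θ` is stationary at `θ₀ = arccos (ν / r)`, and `r ≥ 2ν` puts `θ₀` in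
`[π/3, π/2]`. Since `sin ≥ 1/2` on `[π/6, 5π/6]`, its derivative `r (cos θ - cos θ₀)` has size at
least `r δ / 2` wherever `|θ - θ₀| ≥ δ`, for `δ ≤ 1/2`. Taking `δ = r^{-1/2}/2`, the window
`|θ - θ₀| < δ` contributes at most `2δ`, and van der Corput's first-derivative test (one
integration by parts, using that the derivative of the phase is monotone) bounds each of the two
remaining pieces by `O(1/(rδ)) = O(r^{-1/2})`. For `r < 1` the trivial bound `π` is `O(r⁻¹)`.
-/

open MeasureTheory Real Set
open Complex (I)

theorem integral_abs_deriv_eq_abs_sub {g g' : ℝ → ℝ} {a b : ℝ} (hab : a ≤ b)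
    (hg : ∀ x ∈ Icc a b, HasDerivAt g (g' x) x) (hg' : IntervalIntegrable g' volume a b)
    (hsign : (∀ x ∈ Icc a b, 0 ≤ g' x) ∨ ∀ x ∈ Icc a b, g' x ≤ 0) :
    ∫ x in a..b, |g' x| = |g b - g a| := by
  rw [uIcc_of_le hab |>.symm] at hg
  have hftc := intervalIntegral.integral_eq_sub_of_hasDerivAt hg hg'
  rcases hsign with hpos | hneg
  · have hnn : 0 ≤ ∫ x in a..b, g' x := intervalIntegral.integral_nonneg hab hpos
    rw [abs_of_nonneg (hftc ▸ hnn), ← hftc]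
    refine intervalIntegral.integral_congr fun x hx => abs_of_nonneg (hpos x ?_)
    rwa [uIcc_of_le hab] at hx
  · have hnn : 0 ≤ ∫ x in a..b, -g' x :=
      intervalIntegral.integral_nonneg hab fun x hx => neg_nonneg.mpr (hneg x hx)
    rw [intervalIntegral.integral_neg, hftc] at hnn
    rw [abs_of_nonpos (neg_nonneg.mp hnn), ← hftc, ← intervalIntegral.integral_neg]
    refine intervalIntegral.integral_congr fun x hx => abs_of_nonpos (hneg x ?_)
    rwa [uIcc_of_le hab] at hx

theorem norm_integral_cexp_I_mul_le (φ : ℝ → ℝ) (a b : ℝ) :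
    ‖∫ x in a..b, Complex.exp (I * φ x)‖ ≤ |b - a| := by
  simpa using intervalIntegral.norm_integral_le_of_norm_le_const (C := 1)
    fun x _ => (Complex.norm_exp_I_mul_ofReal (φ x)).le

theorem integral_cexp_I_mul_eq_by_parts {φ φ' g' : ℝ → ℝ} {a b : ℝ} (hab : a ≤ b)
    (hφ : ∀ x ∈ Icc a b, HasDerivAt φ (φ' x) x) (hφ'c : ContinuousOn φ' (Icc a b))
    (hne : ∀ x ∈ Icc a b, φ' x ≠ 0)
    (hg : ∀ x ∈ Icc a b, HasDerivAt (fun x => (φ' x)⁻¹) (g' x) x)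
    (hg'c : ContinuousOn g' (Icc a b)) :
    ∫ x in a..b, Complex.exp (I * φ x) =
      -I * ((φ' b)⁻¹ : ℝ) * Complex.exp (I * φ b) - -I * ((φ' a)⁻¹ : ℝ) * Complex.exp (I * φ a)
        - ∫ x in a..b, -I * g' x * Complex.exp (I * φ x) := by
  have hφc : ContinuousOn φ (Icc a b) :=
    continuousOn_of_forall_continuousAt fun x hx => (hφ x hx).continuousAt
  rw [← uIcc_of_le hab] at hφ hφc hφ'c hne hg hg'c
  set v : ℝ → ℂ := fun x => Complex.exp (I * φ x)
  have hv : ∀ x ∈ uIcc a b, HasDerivAt v (v x * (I * φ' x)) x := fun x hx =>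
    (((hφ x hx).ofReal_comp).const_mul I).cexp
  have hparts := intervalIntegral.integral_mul_deriv_eq_deriv_mul
    (fun x hx => ((hg x hx).ofReal_comp).const_mul (-I)) hv
    (by fun_prop (disch := assumption) :
      ContinuousOn (fun x => -I * (g' x : ℂ)) _).intervalIntegrable
    (by fun_prop (disch := assumption) :
      ContinuousOn (fun x => v x * (I * φ' x)) _).intervalIntegrable
  rw [← hparts]
  refine intervalIntegral.integral_congr fun x hx => ?_
  have : (φ' x : ℂ) ≠ 0 := Complex.ofReal_ne_zero.mpr (hne x hx)
  simp only [Complex.ofReal_inv]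
  field_simp
  rw [Complex.I_sq]
  ring

theorem norm_integral_cexp_I_mul_le_of_le_abs_deriv {φ φ' φ'' : ℝ → ℝ} {a b m : ℝ}
    (hab : a ≤ b) (hm : 0 < m)
    (hφ : ∀ x ∈ Icc a b, HasDerivAt φ (φ' x) x)
    (hφ' : ∀ x ∈ Icc a b, HasDerivAt φ' (φ'' x) x) (hφ'' : ContinuousOn φ'' (Icc a b))
    (hsign : (∀ x ∈ Icc a b, 0 ≤ φ'' x) ∨ ∀ x ∈ Icc a b, φ'' x ≤ 0)
    (hbound : ∀ x ∈ Icc a b, m ≤ |φ' x|) :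
    ‖∫ x in a..b, Complex.exp (I * φ x)‖ ≤ 4 / m := by
  have hne : ∀ x ∈ Icc a b, φ' x ≠ 0 := fun x hx h => by
    have := hbound x hx; rw [h, abs_zero] at this; linarith
  have hinv_le : ∀ x ∈ Icc a b, |(φ' x)⁻¹| ≤ m⁻¹ := fun x hx => by
    rw [abs_inv]; exact inv_anti₀ hm (hbound x hx)
  have hφ'c : ContinuousOn φ' (Icc a b) :=
    continuousOn_of_forall_continuousAt fun x hx => (hφ' x hx).continuousAt
  set g' : ℝ → ℝ := fun x => -φ'' x / φ' x ^ 2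
  have hg : ∀ x ∈ Icc a b, HasDerivAt (fun x => (φ' x)⁻¹) (g' x) x := fun x hx =>
    (hφ' x hx).fun_inv (hne x hx)
  have hg'c : ContinuousOn g' (Icc a b) :=
    hφ''.neg.div (hφ'c.pow 2) fun x hx => pow_ne_zero 2 (hne x hx)
  have hg'sign : (∀ x ∈ Icc a b, 0 ≤ g' x) ∨ ∀ x ∈ Icc a b, g' x ≤ 0 := by
    refine hsign.symm.imp (fun h x hx => ?_) (fun h x hx => ?_)
    · exact div_nonneg (neg_nonneg.mpr (h x hx)) (sq_nonneg _)
    · exact div_nonpos_of_nonpos_of_nonneg (neg_nonpos.mpr (h x hx)) (sq_nonneg _)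
  have hend : ∀ x ∈ Icc a b, ‖-I * ((φ' x)⁻¹ : ℝ) * Complex.exp (I * φ x)‖ ≤ m⁻¹ :=
    fun x hx => by simpa [Complex.norm_exp_I_mul_ofReal] using hinv_le x hx
  have hrem : ‖∫ x in a..b, -I * g' x * Complex.exp (I * φ x)‖ ≤ 2 * m⁻¹ := by
    calc _ ≤ |(∫ x in a..b, |g' x|)| := by
          refine intervalIntegral.norm_integral_le_abs_of_norm_le
            (ae_of_all _ fun x => ?_) (uIcc_of_le hab ▸ hg'c).abs.intervalIntegrable
          simp [Complex.norm_exp_I_mul_ofReal]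
      _ = |(φ' b)⁻¹ - (φ' a)⁻¹| := by
          rw [integral_abs_deriv_eq_abs_sub hab hg
            (uIcc_of_le hab ▸ hg'c).intervalIntegrable hg'sign, abs_abs]
      _ ≤ 2 * m⁻¹ := by
          have := norm_sub_le (φ' b)⁻¹ (φ' a)⁻¹
          simp only [Real.norm_eq_abs] at this
          linarith [hinv_le a ⟨le_rfl, hab⟩, hinv_le b ⟨hab, le_rfl⟩]
  rw [integral_cexp_I_mul_eq_by_parts hab hφ hφ'c hne hg hg'c]
  calc _ ≤ m⁻¹ + m⁻¹ + 2 * m⁻¹ :=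
        (norm_sub_le _ _).trans (add_le_add ((norm_sub_le _ _).trans (add_le_add
          (hend b ⟨hab, le_rfl⟩) (hend a ⟨le_rfl, hab⟩))) hrem)
    _ = 4 / m := by ring

theorem one_half_le_sin {x : ℝ} (h₁ : π / 6 ≤ x) (h₂ : x ≤ 5 * π / 6) : 1 / 2 ≤ sin x := by
  rcases le_or_gt x (π / 2) with h | h
  · rw [← sin_pi_div_six]
    exact sin_le_sin_of_le_of_le_pi_div_two (by linarith [pi_pos]) h h₁
  · rw [← sin_pi_sub, ← sin_pi_div_six]
    exact sin_le_sin_of_le_of_le_pi_div_two (by linarith [pi_pos]) (by linarith) (by linarith)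

theorem sub_div_two_le_cos_sub_cos {x y : ℝ} (hx : π / 6 ≤ x) (hxy : x ≤ y)
    (hy : y ≤ 5 * π / 6) : (y - x) / 2 ≤ cos x - cos y := by
  have hanti : AntitoneOn (fun t => cos t + t / 2) (Icc (π / 6) (5 * π / 6)) := by
    refine antitoneOn_of_deriv_nonpos (convex_Icc _ _) (by fun_prop) (by fun_prop) fun t ht => ?_
    rw [interior_Icc] at ht
    have hderiv : deriv (fun t => cos t + t / 2) t = -sin t + 1 / 2 := by simp
    rw [hderiv]
    linarith [one_half_le_sin ht.1.le ht.2.le]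
  have := hanti ⟨hx, hxy.trans hy⟩ ⟨hx.trans hxy, hy⟩ hxy
  simp only at this
  linarith

theorem div_two_le_abs_cos_sub_cos {θ₀ δ θ : ℝ} (hδ : 0 ≤ δ) (hleft : π / 6 ≤ θ₀ - δ)
    (hright : θ₀ + δ ≤ 5 * π / 6) (hθ : θ ∈ Icc 0 π) (hfar : δ ≤ |θ - θ₀|) :
    δ / 2 ≤ |cos θ - cos θ₀| := by
  rcases le_abs'.mp hfar with h | h
  · have hcos : cos (θ₀ - δ) ≤ cos θ :=
      cos_le_cos_of_nonneg_of_le_pi hθ.1 (by linarith [pi_pos]) (by linarith)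
    have := sub_div_two_le_cos_sub_cos hleft (by linarith) (by linarith : θ₀ ≤ 5 * π / 6)
    rw [abs_of_nonneg (by linarith)]
    linarith
  · have hcos : cos θ ≤ cos (θ₀ + δ) :=
      cos_le_cos_of_nonneg_of_le_pi (by linarith [pi_pos]) hθ.2 (by linarith)
    have := sub_div_two_le_cos_sub_cos (by linarith : π / 6 ≤ θ₀) (by linarith) hright
    rw [abs_of_nonpos (by linarith)]
    linarith

theorem norm_integral_cexp_I_mul_sin_phase_le {ν r a b m : ℝ} (hr : 0 ≤ r) (ha : 0 ≤ a)
    (hab : a ≤ b) (hb : b ≤ π) (hm : 0 < m) (hbound : ∀ θ ∈ Icc a b, m ≤ |r * cos θ - ν|) :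
    ‖∫ θ in a..b, Complex.exp (I * ((r * sin θ - ν * θ : ℝ) : ℂ))‖ ≤ 4 / m := by
  refine norm_integral_cexp_I_mul_le_of_le_abs_deriv (φ'' := fun θ => -(r * sin θ)) hab hm
    (fun θ _ => ((hasDerivAt_sin θ).const_mul r).sub ((hasDerivAt_id θ).const_mul ν) |>.congr_deriv
      (by simp))
    (fun θ _ => ((hasDerivAt_cos θ).const_mul r).sub_const ν |>.congr_deriv (by ring))
    (by fun_prop) (Or.inr fun θ hθ => ?_) hbound
  have := sin_nonneg_of_nonneg_of_le_pi (ha.trans hθ.1) (hθ.2.trans hb)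
  simp only [neg_nonpos]
  positivity

theorem norm_integral_cexp_I_mul_sin_phase_le_of_far {ν r θ₀ δ m : ℝ} (hr : 0 ≤ r)
    (hδ : 0 ≤ δ) (hleft : 0 ≤ θ₀ - δ) (hright : θ₀ + δ ≤ π) (hm : 0 < m)
    (hbound : ∀ θ ∈ Icc 0 π, δ ≤ |θ - θ₀| → m ≤ |r * cos θ - ν|) :
    ‖∫ θ in (0 : ℝ)..π, Complex.exp (I * ((r * sin θ - ν * θ : ℝ) : ℂ))‖ ≤ 8 / m + 2 * δ := by
  set f : ℝ → ℂ := fun θ => Complex.exp (I * ((r * sin θ - ν * θ : ℝ) : ℂ))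
  have hint : ∀ a b : ℝ, IntervalIntegrable f volume a b := fun a b =>
    (by fun_prop : Continuous f).intervalIntegrable a b
  rw [← intervalIntegral.integral_add_adjacent_intervals (hint 0 (θ₀ + δ)) (hint _ π),
    ← intervalIntegral.integral_add_adjacent_intervals (hint 0 (θ₀ - δ)) (hint _ (θ₀ + δ))]
  have h₁ : ‖∫ θ in (0 : ℝ)..θ₀ - δ, f θ‖ ≤ 4 / m := by
    refine norm_integral_cexp_I_mul_sin_phase_le hr le_rfl hleft (by linarith) hm fun θ hθ => ?_
    refine hbound θ ⟨hθ.1, by linarith [hθ.2]⟩ ?_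
    rw [abs_of_nonpos (by linarith [hθ.2])]
    linarith [hθ.2]
  have h₂ : ‖∫ θ in θ₀ - δ..θ₀ + δ, f θ‖ ≤ 2 * δ := by
    refine (norm_integral_cexp_I_mul_le _ _ _).trans_eq ?_
    rw [abs_of_nonneg (by linarith)]
    ring
  have h₃ : ‖∫ θ in θ₀ + δ..π, f θ‖ ≤ 4 / m := by
    refine norm_integral_cexp_I_mul_sin_phase_le hr (by linarith) hright le_rfl hm fun θ hθ => ?_
    refine hbound θ ⟨by linarith [hθ.1], hθ.2⟩ ?_
    rw [abs_of_nonneg (by linarith [hθ.1])]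
    linarith [hθ.1]
  calc _ ≤ ‖∫ θ in (0 : ℝ)..θ₀ - δ, f θ‖ + ‖∫ θ in θ₀ - δ..θ₀ + δ, f θ‖
          + ‖∫ θ in θ₀ + δ..π, f θ‖ := norm_add₃_le
    _ ≤ 4 / m + 2 * δ + 4 / m := by gcongr
    _ = 8 / m + 2 * δ := by ring

theorem pi_div_three_le_arccos {x : ℝ} (hx : x ≤ 1 / 2) : π / 3 ≤ arccos x := by
  rw [← arccos_cos (x := π / 3) (by positivity) (by linarith [pi_pos]), cos_pi_div_three]
  exact arccos_le_arccos hx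

theorem norm_integral_cexp_I_mul_sin_phase_le_div_sqrt {ν r : ℝ} (hν : 0 ≤ ν) (hr : 1 ≤ r)
    (h2ν : 2 * ν ≤ r) :
    ‖∫ θ in (0 : ℝ)..π, Complex.exp (I * ((r * sin θ - ν * θ : ℝ) : ℂ))‖ ≤ 33 / √r := by
  have hr₀ : 0 ≤ r := zero_le_one.trans hr
  have hs : 1 ≤ √r := one_le_sqrt.mpr hr
  have hrδ : r * (2 * √r)⁻¹ / 2 = √r / 4 := by
    have := mul_self_sqrt hr₀
    field_simp
    linarith
  set δ := (2 * √r)⁻¹ with hδ_def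
  have hδ : 0 ≤ δ := by positivity
  have hδ_le : δ ≤ 1 / 2 := by
    rw [one_div]; exact inv_anti₀ two_pos (by linarith)
  have hc : ν / r ≤ 1 / 2 := by rw [div_le_iff₀ (by linarith)]; linarith
  set θ₀ := arccos (ν / r)
  have hν_eq : ν = r * cos θ₀ := by
    rw [cos_arccos (by linarith [div_nonneg hν hr₀]) (by linarith)]
    field_simp
  have hθ₀_le : θ₀ ≤ π / 2 := arccos_le_pi_div_two.mpr (by positivity)
  have hθ₀_ge : π / 3 ≤ θ₀ := pi_div_three_le_arccos hc
  have hπ : 3 ≤ π := pi_gt_three.le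
  have hleft : π / 6 ≤ θ₀ - δ := by linarith
  have hright : θ₀ + δ ≤ 5 * π / 6 := by linarith
  refine (norm_integral_cexp_I_mul_sin_phase_le_of_far (θ₀ := θ₀) hr₀ hδ (by linarith) (by linarith)
    (by positivity : 0 < √r / 4) fun θ hθ hfar => ?_).trans_eq ?_
  · rw [hν_eq, ← mul_sub, abs_mul, abs_of_nonneg hr₀, ← hrδ, mul_div_assoc]
    exact mul_le_mul_of_nonneg_left (div_two_le_abs_cos_sub_cos hδ hleft hright hθ hfar) hr₀
  · rw [hδ_def]
    field_simp
    ring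

/-- Stationary phase asymptotics for the oscillatory integral `∫_0^π e^{i(r sin θ - νθ)} dθ`
in the regime `r ≥ 2ν` (estimate (2.16)). -/
theorem oscillatory_integral_asymptotics :
    ∃ C : ℝ, 0 < C ∧ ∀ ν r : ℝ, 0 ≤ ν → 0 < r → 2 * ν ≤ r →
      ∃ a E : ℂ, ‖a‖ ≤ C ∧ ‖E‖ ≤ C * r⁻¹ ∧
        (∫ θ in (0 : ℝ)..π,
            Complex.exp (Complex.I * ((r * Real.sin θ - ν * θ : ℝ) : ℂ)))
          = a * ((r ^ (-(1 : ℝ) / 2) : ℝ) : ℂ) * Complex.exp (-(Complex.I * (r : ℂ))) + E := by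
  refine ⟨33, by norm_num, fun ν r hν hr h2ν => ?_⟩
  set J := ∫ θ in (0 : ℝ)..π, Complex.exp (I * ((r * Real.sin θ - ν * θ : ℝ) : ℂ))
  rcases le_or_gt 1 r with hr₁ | hr₁
  · have hrpow : r ^ (-(1 : ℝ) / 2) = (√r)⁻¹ := by
      rw [neg_div, rpow_neg hr.le, sqrt_eq_rpow]
    have hs : 0 < √r := sqrt_pos.mpr hr
    refine ⟨J * √r * Complex.exp (I * r), 0, ?_, by simp; positivity, ?_⟩
    · rw [norm_mul, norm_mul, mul_comm I, Complex.norm_exp_ofReal_mul_I, mul_one,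
        Complex.norm_real, norm_of_nonneg hs.le, ← le_div_iff₀ hs]
      exact norm_integral_cexp_I_mul_sin_phase_le_div_sqrt hν hr₁ h2ν
    · have : (√r : ℂ) ≠ 0 := Complex.ofReal_ne_zero.mpr hs.ne'
      rw [hrpow, add_zero, Complex.exp_neg]
      push_cast
      field_simp
  · refine ⟨0, J, by simp, ?_, by simp⟩
    calc ‖J‖ ≤ |π - 0| := norm_integral_cexp_I_mul_le _ _ _
      _ ≤ 33 * 1 := by rw [sub_zero, abs_of_pos pi_pos]; linarith [pi_lt_four]
      _ ≤ 33 * r⁻¹ := by gcongr; exact one_le_inv₀ hr |>.mpr hr₁.le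
end

section
/- There is an absolute constant C such that for every real ν ≥ 0 and every r > 0 with r ≥ 2ν, one has |∫_{[0, π/4] ∪ [3π/4, π]} e^{i(r sin θ - ν θ)} dθ| ≤ C r^{-1}. -/
/-!
On both arcs `|cos θ| ≥ √2 / 2`, so when `ν ≤ r / 2` the phase `φ θ = r sin θ - ν θ` has
`|φ'| ≥ r / 5` and `|φ''| ≤ r` there. Writing `e^{iφ} = (iφ')⁻¹ (e^{iφ})'` and integrating by
parts once bounds the integral over an interval of length `L` by `2 / m + L M / m²`, where
`m ≤ |φ'|` and `|φ''| ≤ M`; with `m = r / 5` and `M = r` this is `O(1 / r)`.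
-/

open MeasureTheory Real

namespace Complex

section OscillatoryIntegral

variable {φ φ' φ'' : ℝ → ℝ} {a b : ℝ}

theorem intervalIntegral_exp_I_mul_eq_sub_add
    (hφ : ∀ x ∈ Set.uIcc a b, HasDerivAt φ (φ' x) x)
    (hφ' : ∀ x ∈ Set.uIcc a b, HasDerivAt φ' (φ'' x) x)
    (hφ'' : ContinuousOn φ'' (Set.uIcc a b)) (hne : ∀ x ∈ Set.uIcc a b, φ' x ≠ 0) :
    ∫ x in a..b, exp (I * φ x) = exp (I * φ b) / (I * φ' b) - exp (I * φ a) / (I * φ' a)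
      + ∫ x in a..b, I * φ'' x / (I * φ' x) ^ 2 * exp (I * φ x) := by
  have hne' : ∀ x ∈ Set.uIcc a b, I * (φ' x : ℂ) ≠ 0 := fun x hx ↦
    mul_ne_zero I_ne_zero (ofReal_ne_zero.2 (hne x hx))
  have hφ'_cont : ContinuousOn (fun x ↦ I * (φ' x : ℂ)) (Set.uIcc a b) :=
    continuousOn_const.mul (continuous_ofReal.comp_continuousOn (HasDerivAt.continuousOn hφ'))
  have he : ∀ x ∈ Set.uIcc a b,
      HasDerivAt (fun x ↦ exp (I * φ x)) (I * φ' x * exp (I * φ x)) x := fun x hx ↦ by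
    simpa only [mul_comm] using ((hφ x hx).ofReal_comp.const_mul I).cexp
  have hv : ∀ x ∈ Set.uIcc a b, HasDerivAt (fun x ↦ (I * φ' x)⁻¹)
      (-(I * φ'' x) / (I * φ' x) ^ 2) x := fun x hx ↦
    ((hφ' x hx).ofReal_comp.const_mul I).inv (hne' x hx)
  have hv'_cont : ContinuousOn (fun x ↦ -(I * φ'' x) / (I * φ' x) ^ 2) (Set.uIcc a b) :=
    (continuousOn_const.mul (continuous_ofReal.comp_continuousOn hφ'')).neg.div
      (hφ'_cont.pow 2) fun x hx ↦ pow_ne_zero 2 (hne' x hx)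
  have hparts := intervalIntegral.integral_mul_deriv_eq_deriv_mul hv he
    hv'_cont.intervalIntegrable (hφ'_cont.mul (HasDerivAt.continuousOn he)).intervalIntegrable
  rw [intervalIntegral.integral_congr fun x hx ↦ by
    rw [← mul_assoc, inv_mul_cancel₀ (hne' x hx), one_mul]] at hparts
  rw [hparts]
  simp only [div_eq_inv_mul, mul_neg, neg_mul, intervalIntegral.integral_neg, sub_neg_eq_add]

theorem norm_intervalIntegral_exp_I_mul_le {m M : ℝ} (hab : a ≤ b) (hm : 0 < m)
    (hφ : ∀ x ∈ Set.Icc a b, HasDerivAt φ (φ' x) x)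
    (hφ' : ∀ x ∈ Set.Icc a b, HasDerivAt φ' (φ'' x) x) (hφ'' : ContinuousOn φ'' (Set.Icc a b))
    (hm_le : ∀ x ∈ Set.Icc a b, m ≤ |φ' x|) (hM : ∀ x ∈ Set.Icc a b, |φ'' x| ≤ M) :
    ‖∫ x in a..b, exp (I * φ x)‖ ≤ 2 / m + (b - a) * (M / m ^ 2) := by
  rw [← Set.uIcc_of_le hab] at hφ hφ' hφ'' hm_le hM
  have hne : ∀ x ∈ Set.uIcc a b, φ' x ≠ 0 := fun x hx ↦
    abs_pos.1 (hm.trans_le (hm_le x hx))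
  have norm_I_mul (y : ℝ) : ‖I * (y : ℂ)‖ = |y| := by simp
  have norm_boundary : ∀ x ∈ Set.uIcc a b, ‖exp (I * φ x) / (I * φ' x)‖ ≤ 1 / m :=
    fun x hx ↦ by
      rw [norm_div, norm_exp_I_mul_ofReal, norm_I_mul]
      exact one_div_le_one_div_of_le hm (hm_le x hx)
  have norm_integrand : ∀ x ∈ Set.uIcc a b,
      ‖I * φ'' x / (I * φ' x) ^ 2 * exp (I * φ x)‖ ≤ M / m ^ 2 := fun x hx ↦ by
    rw [norm_mul, norm_exp_I_mul_ofReal, mul_one, norm_div, norm_pow, norm_I_mul, norm_I_mul]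
    exact div_le_div₀ ((abs_nonneg _).trans (hM x hx)) (hM x hx) (by positivity)
      (pow_le_pow_left₀ hm.le (hm_le x hx) 2)
  rw [intervalIntegral_exp_I_mul_eq_sub_add hφ hφ' hφ'' hne]
  calc _ ≤ 1 / m + 1 / m + M / m ^ 2 * |b - a| := by
        refine (norm_add_le _ _).trans (add_le_add ((norm_sub_le _ _).trans
          (add_le_add ?_ ?_)) ?_)
        · exact norm_boundary b Set.right_mem_uIcc
        · exact norm_boundary a Set.left_mem_uIcc
        · exact intervalIntegral.norm_integral_le_of_norm_le_const
            fun x hx ↦ norm_integrand x (Set.uIoc_subset_uIcc hx)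
    _ = 2 / m + (b - a) * (M / m ^ 2) := by
        rw [abs_of_nonneg (sub_nonneg.2 hab)]
        ring

end OscillatoryIntegral

end Complex

theorem sqrt_two_div_two_le_cos_of_mem {θ : ℝ} (hθ : θ ∈ Set.Icc 0 (π / 4)) :
    √2 / 2 ≤ cos θ :=
  cos_pi_div_four ▸ cos_le_cos_of_nonneg_of_le_pi hθ.1 (by linarith [pi_pos]) hθ.2

theorem cos_le_neg_sqrt_two_div_two_of_mem {θ : ℝ} (hθ : θ ∈ Set.Icc (3 * π / 4) π) :
    cos θ ≤ -(√2 / 2) := by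
  have h : cos (3 * π / 4) = -(√2 / 2) := by
    rw [show 3 * π / 4 = π - π / 4 by ring, cos_pi_sub, cos_pi_div_four]
  exact h ▸ cos_le_cos_of_nonneg_of_le_pi (by linarith [pi_pos]) hθ.2 hθ.1

theorem div_five_le_abs_mul_cos_sub {ν r θ : ℝ} (hν : 0 ≤ ν) (hr : 0 < r) (hνr : 2 * ν ≤ r)
    (hθ : θ ∈ Set.Icc 0 (π / 4) ∪ Set.Icc (3 * π / 4) π) : r / 5 ≤ |r * cos θ - ν| := by
  have hsqrt2 : (7 / 5 : ℝ) ≤ √2 := Real.le_sqrt_of_sq_le (by norm_num)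
  rcases hθ with hθ | hθ
  · have := mul_le_mul_of_nonneg_left (sqrt_two_div_two_le_cos_of_mem hθ) hr.le
    exact le_abs.2 (.inl (by nlinarith))
  · have := mul_le_mul_of_nonneg_left (cos_le_neg_sqrt_two_div_two_of_mem hθ) hr.le
    exact le_abs.2 (.inr (by nlinarith))

theorem norm_setIntegral_Icc_exp_sin_phase_le {ν r a b m : ℝ} (hab : a ≤ b) (hm : 0 < m)
    (hm_le : ∀ θ ∈ Set.Icc a b, m ≤ |r * cos θ - ν|) :
    ‖∫ θ in Set.Icc a b, Complex.exp (Complex.I * ((r * sin θ - ν * θ : ℝ) : ℂ))‖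
      ≤ 2 / m + (b - a) * (|r| / m ^ 2) := by
  rw [integral_Icc_eq_integral_Ioc, ← intervalIntegral.integral_of_le hab]
  refine Complex.norm_intervalIntegral_exp_I_mul_le hab hm (φ' := fun θ ↦ r * cos θ - ν)
    (φ'' := fun θ ↦ -(r * sin θ)) (fun θ _ ↦ ?_) (fun θ _ ↦ ?_) (by fun_prop) hm_le
    (fun θ _ ↦ ?_)
  · exact (((hasDerivAt_sin θ).const_mul r).sub ((hasDerivAt_id' θ).const_mul ν)).congr_deriv
      (by ring)
  · simpa using ((hasDerivAt_cos θ).const_mul r).sub_const ν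
  · rw [abs_neg, abs_mul]
    exact mul_le_of_le_one_right (abs_nonneg r) (abs_sin_le_one θ)

/-- Non-stationary phase bound: for `r ≥ 2ν`,
`|∫_{[0,π/4] ∪ [3π/4,π]} e^{i(r sin θ - νθ)} dθ| ≤ C r⁻¹`. -/
theorem nonstationary_phase_bound :
    ∃ C : ℝ, 0 < C ∧ ∀ ν r : ℝ, 0 ≤ ν → 0 < r → 2 * ν ≤ r →
      ‖∫ θ in (Set.Icc (0 : ℝ) (π / 4) ∪ Set.Icc (3 * π / 4) π),
          Complex.exp (Complex.I * ((r * Real.sin θ - ν * θ : ℝ) : ℂ))‖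
        ≤ C * r⁻¹ := by
  refine ⟨2 * (10 + 25 * (π / 4)), by positivity, fun ν r hν hr hνr ↦ ?_⟩
  set S := Set.Icc (0 : ℝ) (π / 4) ∪ Set.Icc (3 * π / 4) π
  set f : ℝ → ℂ := fun θ ↦ Complex.exp (Complex.I * ((r * sin θ - ν * θ : ℝ) : ℂ))
  have hf : Continuous f := by fun_prop
  have piece {a b : ℝ} (hab : a ≤ b) (hba : b - a = π / 4) (hS : Set.Icc a b ⊆ S) :
      ‖∫ θ in Set.Icc a b, f θ‖ ≤ (10 + 25 * (π / 4)) * r⁻¹ := by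
    refine (norm_setIntegral_Icc_exp_sin_phase_le hab (by positivity : 0 < r / 5)
      fun θ hθ ↦ div_five_le_abs_mul_cos_sub hν hr hνr (hS hθ)).trans_eq ?_
    rw [hba, abs_of_pos hr]
    field_simp
    ring
  have hdisj : Disjoint (Set.Icc 0 (π / 4)) (Set.Icc (3 * π / 4) π) :=
    Set.disjoint_left.2 fun θ h₁ h₂ ↦ by linarith [h₁.2, h₂.1, pi_pos]
  rw [setIntegral_union hdisj measurableSet_Icc hf.integrableOn_Icc hf.integrableOn_Icc]
  calc _ ≤ ‖∫ θ in Set.Icc 0 (π / 4), f θ‖ + ‖∫ θ in Set.Icc (3 * π / 4) π, f θ‖ :=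
        norm_add_le _ _
    _ ≤ (10 + 25 * (π / 4)) * r⁻¹ + (10 + 25 * (π / 4)) * r⁻¹ :=
        add_le_add (piece (by linarith [pi_pos]) (by ring) Set.subset_union_left)
          (piece (by linarith [pi_pos]) (by ring) Set.subset_union_right)
    _ = _ := by ring
end

section
/- There is an absolute constant c > 0 such that for every real ν ≥ 0, every r > 0 with r ≥ 100ν, and all ρ₁, ρ₂, ρ₃, ρ₄ ∈ [1/2, 4] satisfying ρ₁² - ρ₂² = ρ₄² - ρ₃², one has (1/r)·| ((ρ₁ r)² - ν²)^{1/2} - ((ρ₂ r)² - ν²)^{1/2} + ((ρ₃ r)² - ν²)^{1/2} - ((ρ₄ r)² - ν²)^{1/2} | ≥ c · |ρ₁² - ρ₂²| · |ρ₃² - ρ₂²|. (The left-hand side is the absolute value of the derivative in r of the phase θ_ν(ρ₁ r) - θ_ν(ρ₂ r) + θ_ν(ρ₃ r) - θ_ν(ρ₄ r), where θ_ν(r) = (r² - ν²)^{1/2} - ν·arccos(ν/r) - π/4.) -/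
open Real

lemma phase_aux_pos (ρ ν r : ℝ) (hρ : 1/2 ≤ ρ) (hr : 0 < r) (hν : 0 ≤ ν)
    (hνr : 100 * ν ≤ r) : 0 < (ρ * r) ^ 2 - ν ^ 2 := by
  have h1 : r / 2 ≤ ρ * r := by nlinarith
  have h2 : ν ^ 2 ≤ (r / 100) ^ 2 := by nlinarith
  nlinarith

lemma phase_aux_ub (ρ ν r : ℝ) (hρl : 0 ≤ ρ) (hρu : ρ ≤ 4) (hr : 0 < r) :
    Real.sqrt ((ρ * r) ^ 2 - ν ^ 2) ≤ 4 * r := by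
  have hρ2 : ρ ^ 2 ≤ 16 := by nlinarith
  have hle : (ρ * r) ^ 2 - ν ^ 2 ≤ (4 * r) ^ 2 := by
    nlinarith [sq_nonneg ν, mul_le_mul_of_nonneg_right hρ2 (sq_nonneg r)]
  calc Real.sqrt ((ρ * r) ^ 2 - ν ^ 2) ≤ Real.sqrt ((4 * r) ^ 2) :=
        Real.sqrt_le_sqrt hle
    _ = 4 * r := Real.sqrt_sq (by positivity)

/-- Lower bound for the derivative of the resonant phase: on the set
`ρ₁² - ρ₂² = ρ₄² - ρ₃²`, `|φ'_r| ≥ c |ρ₁² - ρ₂²| |ρ₃² - ρ₂²|` for `r ≥ 100ν`. -/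
theorem phase_derivative_lower_bound :
    ∃ c : ℝ, 0 < c ∧
      ∀ ν r : ℝ, 0 ≤ ν → 0 < r → 100 * ν ≤ r →
      ∀ ρ₁ ρ₂ ρ₃ ρ₄ : ℝ,
        ρ₁ ∈ Set.Icc (1 / 2 : ℝ) 4 → ρ₂ ∈ Set.Icc (1 / 2 : ℝ) 4 →
        ρ₃ ∈ Set.Icc (1 / 2 : ℝ) 4 → ρ₄ ∈ Set.Icc (1 / 2 : ℝ) 4 →
        ρ₁ ^ 2 - ρ₂ ^ 2 = ρ₄ ^ 2 - ρ₃ ^ 2 →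
        c * |ρ₁ ^ 2 - ρ₂ ^ 2| * |ρ₃ ^ 2 - ρ₂ ^ 2|
          ≤ (1 / r) *
              |Real.sqrt ((ρ₁ * r) ^ 2 - ν ^ 2) - Real.sqrt ((ρ₂ * r) ^ 2 - ν ^ 2) +
                Real.sqrt ((ρ₃ * r) ^ 2 - ν ^ 2) - Real.sqrt ((ρ₄ * r) ^ 2 - ν ^ 2)| := by
  refine ⟨1/512, by norm_num, ?_⟩
  intro ν r hν hr hνr ρ₁ ρ₂ ρ₃ ρ₄ h1 h2 h3 h4 hres
  obtain ⟨h1l, h1u⟩ := h1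
  obtain ⟨h2l, h2u⟩ := h2
  obtain ⟨h3l, h3u⟩ := h3
  obtain ⟨h4l, h4u⟩ := h4
  have hp1 := phase_aux_pos ρ₁ ν r h1l hr hν hνr
  have hp2 := phase_aux_pos ρ₂ ν r h2l hr hν hνr
  have hp3 := phase_aux_pos ρ₃ ν r h3l hr hν hνr
  have hp4 := phase_aux_pos ρ₄ ν r h4l hr hν hνr
  have hb1 := phase_aux_ub ρ₁ ν r (by linarith) h1u hr
  have hb2 := phase_aux_ub ρ₂ ν r (by linarith) h2u hr
  have hb3 := phase_aux_ub ρ₃ ν r (by linarith) h3u hr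
  have hb4 := phase_aux_ub ρ₄ ν r (by linarith) h4u hr
  set s₁ := Real.sqrt ((ρ₁ * r) ^ 2 - ν ^ 2) with hs₁
  set s₂ := Real.sqrt ((ρ₂ * r) ^ 2 - ν ^ 2) with hs₂
  set s₃ := Real.sqrt ((ρ₃ * r) ^ 2 - ν ^ 2) with hs₃
  set s₄ := Real.sqrt ((ρ₄ * r) ^ 2 - ν ^ 2) with hs₄
  have hq1 : s₁ ^ 2 = (ρ₁ * r) ^ 2 - ν ^ 2 := Real.sq_sqrt hp1.le
  have hq2 : s₂ ^ 2 = (ρ₂ * r) ^ 2 - ν ^ 2 := Real.sq_sqrt hp2.le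
  have hq3 : s₃ ^ 2 = (ρ₃ * r) ^ 2 - ν ^ 2 := Real.sq_sqrt hp3.le
  have hq4 : s₄ ^ 2 = (ρ₄ * r) ^ 2 - ν ^ 2 := Real.sq_sqrt hp4.le
  have hpos1 : 0 < s₁ := Real.sqrt_pos.mpr hp1
  have hpos2 : 0 < s₂ := Real.sqrt_pos.mpr hp2
  have hpos3 : 0 < s₃ := Real.sqrt_pos.mpr hp3
  have hpos4 : 0 < s₄ := Real.sqrt_pos.mpr hp4
  set h := ρ₁ ^ 2 - ρ₂ ^ 2 with hh
  set k := ρ₃ ^ 2 - ρ₂ ^ 2 with hk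
  have e1 : (s₁ - s₂) * (s₁ + s₂) = h * r ^ 2 := by
    rw [hh]; linear_combination hq1 - hq2
  have e2 : (s₃ - s₄) * (s₃ + s₄) = -(h * r ^ 2) := by
    rw [hh]; linear_combination hq3 - hq4 + r ^ 2 * hres
  have e3 : (s₃ - s₂) * (s₃ + s₂) = k * r ^ 2 := by
    rw [hk]; linear_combination hq3 - hq2
  have e4 : (s₄ - s₁) * (s₄ + s₁) = k * r ^ 2 := by
    rw [hk]; linear_combination hq4 - hq1 - r ^ 2 * hres
  set A := s₁ + s₂ with hA
  set B := s₃ + s₄ with hB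
  set C := s₂ + s₃ with hC
  set D := s₁ + s₄ with hD
  set E := s₁ - s₂ + s₃ - s₄ with hE
  have key : E * (A * B * C * D) = h * k * r ^ 4 * (C + D) := by
    rw [hE, hA, hB, hC, hD]
    linear_combination ((s₃ + s₄) * (s₂ + s₃) * (s₁ + s₄)) * e1 +
      ((s₁ + s₂) * (s₂ + s₃) * (s₁ + s₄)) * e2 +
      (h * r ^ 2 * (s₁ + s₄)) * e3 + (h * r ^ 2 * (s₂ + s₃)) * e4
  have hApos : 0 < A := by positivity
  have hBpos : 0 < B := by positivity
  have hCpos : 0 < C := by positivity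
  have hDpos : 0 < D := by positivity
  have habs : |E| * (A * B * C * D) = |h| * |k| * (r ^ 4 * (C + D)) := by
    have hc := congrArg abs key
    rw [abs_mul, abs_of_pos (by positivity : (0:ℝ) < A * B * C * D)] at hc
    rw [hc, abs_mul, abs_mul, abs_mul, abs_of_pos (pow_pos hr 4),
      abs_of_pos (by positivity : (0:ℝ) < C + D)]
    ring
  have hprod : A * B * C * D ≤ 512 * (r ^ 3 * (C + D)) := by
    have hA8 : A ≤ 8 * r := by rw [hA]; linarith
    have hB8 : B ≤ 8 * r := by rw [hB]; linarith
    have hC8 : C ≤ 8 * r := by rw [hC]; linarith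
    have hAB : A * B ≤ (8 * r) * (8 * r) :=
      mul_le_mul hA8 hB8 hBpos.le (by positivity)
    have hDle : D ≤ C + D := by linarith
    have hCD : C * D ≤ 8 * r * (C + D) :=
      mul_le_mul hC8 hDle hDpos.le (by positivity)
    calc A * B * C * D = (A * B) * (C * D) := by ring
      _ ≤ ((8 * r) * (8 * r)) * (8 * r * (C + D)) :=
          mul_le_mul hAB hCD (by positivity) (by positivity)
      _ = 512 * (r ^ 3 * (C + D)) := by ring
  have hEnn : 0 ≤ |E| := abs_nonneg _
  have t1 : |h| * |k| * r * (r ^ 3 * (C + D)) ≤ 512 * |E| * (r ^ 3 * (C + D)) := by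
    have hm : |E| * (A * B * C * D) ≤ |E| * (512 * (r ^ 3 * (C + D))) :=
      mul_le_mul_of_nonneg_left hprod hEnn
    calc |h| * |k| * r * (r ^ 3 * (C + D)) = |h| * |k| * (r ^ 4 * (C + D)) := by ring
      _ = |E| * (A * B * C * D) := habs.symm
      _ ≤ |E| * (512 * (r ^ 3 * (C + D))) := hm
      _ = 512 * |E| * (r ^ 3 * (C + D)) := by ring
  have hpos : (0:ℝ) < r ^ 3 * (C + D) := by positivity
  have t2 : |h| * |k| * r ≤ 512 * |E| := le_of_mul_le_mul_right t1 hpos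
  rw [show (1:ℝ) / r * |s₁ - s₂ + s₃ - s₄| = |E| / r by rw [hE]; ring,
    le_div_iff₀ hr]
  linarith
end

section
/- There is an absolute constant C such that for every nonnegative measurable function b ∈ L⁴(ℝ) and all integers i, j ≥ 0, one has ∫_ℝ b(ρ₂) ( ∫_{{ρ₁ : 2^{-i} ≤ |ρ₁ - ρ₂| ≤ 2^{-i+1}}} b(ρ₁) ( ∫_{{ρ₃ : 2^{-j} ≤ |ρ₃ - ρ₂| ≤ 2^{-j+1}}} b(ρ₃) b(ρ₁ - ρ₂ + ρ₃) dρ₃ ) dρ₁ ) dρ₂ ≤ C · 2^{-(i+j)} · ‖b‖_{L⁴(ℝ)}⁴. -/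
/-!
Writing `ρ₂ = x`, `ρ₁ = x + s` and `ρ₃ = x + t`, the integrand becomes the product of `b` over the
vertices `x, x + s, x + t, x + s + t` of a parallelogram, with `s, t` ranging over the dyadic shells
`2^{-i} ≤ |s| ≤ 2^{-i+1}` and `2^{-j} ≤ |t| ≤ 2^{-j+1}`. For fixed `s, t`, AM–GM and translation
invariance bound the integral over `x` by `‖b‖₄⁴`; integrating over the shells, of measure
`2 · 2^{-i}` and `2 · 2^{-j}`, gives the estimate with `C = 4`.
-/

open MeasureTheory Set
open scoped ENNReal NNReal

theorem ENNReal.two_mul_le_add_sq (a b : ℝ≥0∞) : 2 * a * b ≤ a ^ 2 + b ^ 2 := by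
  rcases eq_or_ne a ∞ with rfl | ha
  · simp
  rcases eq_or_ne b ∞ with rfl | hb
  · simp
  lift a to ℝ≥0 using ha
  lift b to ℝ≥0 using hb
  exact_mod_cast _root_.two_mul_le_add_sq a b

theorem ENNReal.four_mul_le_add_pow_four (a b c d : ℝ≥0∞) :
    4 * (a * b * c * d) ≤ a ^ 4 + b ^ 4 + c ^ 4 + d ^ 4 :=
  calc 4 * (a * b * c * d) = 2 * (2 * (a * b) * (c * d)) := by ring
    _ ≤ 2 * ((a * b) ^ 2 + (c * d) ^ 2) := by gcongr; exact two_mul_le_add_sq _ _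
    _ = 2 * a ^ 2 * b ^ 2 + 2 * c ^ 2 * d ^ 2 := by ring
    _ ≤ (a ^ 2) ^ 2 + (b ^ 2) ^ 2 + ((c ^ 2) ^ 2 + (d ^ 2) ^ 2) :=
        add_le_add (two_mul_le_add_sq _ _) (two_mul_le_add_sq _ _)
    _ = a ^ 4 + b ^ 4 + c ^ 4 + d ^ 4 := by ring

section Parallelogram

variable {G : Type*} [AddCommGroup G] [MeasurableSpace G] {μ : Measure G}

theorem lintegral_parallelogram_le [MeasurableAdd G] [μ.IsAddRightInvariant] {g : G → ℝ≥0∞}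
    (hg : Measurable g) (s t : G) :
    ∫⁻ x, g x * g (x + s) * g (x + t) * g (x + s + t) ∂μ ≤ ∫⁻ x, g x ^ 4 ∂μ := by
  have hshift : ∀ u, ∫⁻ x, g (x + u) ^ 4 ∂μ = ∫⁻ x, g x ^ 4 ∂μ :=
    lintegral_add_right_eq_self (fun x ↦ g x ^ 4)
  refine (ENNReal.mul_le_mul_iff_right (by norm_num : (4 : ℝ≥0∞) ≠ 0) (by norm_num)).1 ?_
  calc 4 * ∫⁻ x, g x * g (x + s) * g (x + t) * g (x + s + t) ∂μ
      = ∫⁻ x, 4 * (g x * g (x + s) * g (x + t) * g (x + s + t)) ∂μ :=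
        (lintegral_const_mul' _ _ (by norm_num)).symm
    _ ≤ ∫⁻ x, g x ^ 4 + g (x + s) ^ 4 + g (x + t) ^ 4 + g (x + (s + t)) ^ 4 ∂μ := by
        gcongr with x
        rw [← add_assoc]
        exact ENNReal.four_mul_le_add_pow_four _ _ _ _
    _ = 4 * ∫⁻ x, g x ^ 4 ∂μ := by
        rw [lintegral_add_left (by fun_prop), lintegral_add_left (by fun_prop),
          lintegral_add_left (by fun_prop), hshift, hshift, hshift]
        ring

theorem lintegral_setLIntegral_setLIntegral_parallelogram_le [MeasurableAdd₂ G] [SFinite μ]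
    [μ.IsAddRightInvariant] {g : G → ℝ≥0∞} (hg : Measurable g) (S T : Set G) :
    ∫⁻ x, ∫⁻ s in S, ∫⁻ t in T, g x * g (x + s) * g (x + t) * g (x + s + t) ∂μ ∂μ ∂μ
      ≤ μ S * μ T * ∫⁻ x, g x ^ 4 ∂μ := by
  have hF : Measurable fun p : (G × G) × G ↦
      g p.1.1 * g (p.1.1 + p.1.2) * g (p.1.1 + p.2) * g (p.1.1 + p.1.2 + p.2) := by fun_prop
  calc ∫⁻ x, ∫⁻ s in S, ∫⁻ t in T, g x * g (x + s) * g (x + t) * g (x + s + t) ∂μ ∂μ ∂μ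
      = ∫⁻ s in S, ∫⁻ t in T, ∫⁻ x, g x * g (x + s) * g (x + t) * g (x + s + t) ∂μ ∂μ ∂μ := by
        rw [lintegral_lintegral_swap hF.lintegral_prod_right'.aemeasurable]
        refine lintegral_congr fun s ↦ lintegral_lintegral_swap ?_
        exact (hF.comp (by fun_prop : Measurable fun p : G × G ↦ ((p.1, s), p.2))).aemeasurable
    _ ≤ ∫⁻ _ in S, ∫⁻ _ in T, ∫⁻ x, g x ^ 4 ∂μ ∂μ ∂μ :=
        lintegral_mono fun s ↦ lintegral_mono fun t ↦ lintegral_parallelogram_le hg s t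
    _ = μ S * μ T * ∫⁻ x, g x ^ 4 ∂μ := by
        rw [setLIntegral_const, setLIntegral_const]
        ring

theorem setLIntegral_preimage_sub_right [MeasurableAdd G] [μ.IsAddRightInvariant]
    (f : G → ℝ≥0∞) (x : G) (S : Set G) :
    ∫⁻ y in (· - x) ⁻¹' S, f y ∂μ = ∫⁻ s in S, f (x + s) ∂μ := by
  simpa using (measurePreserving_sub_right μ x).setLIntegral_comp_preimage_emb
    (measurableEmbedding_subRight x) (fun s ↦ f (x + s)) S

theorem lintegral_mul_setLIntegral_preimage_sub [MeasurableAdd G] [μ.IsAddRightInvariant]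
    {g : G → ℝ≥0∞} (hg : ∀ x, g x ≠ ∞) (S T : Set G) :
    ∫⁻ x, g x * ∫⁻ y in (· - x) ⁻¹' S, g y * ∫⁻ z in (· - x) ⁻¹' T, g z * g (y - x + z) ∂μ ∂μ ∂μ
      = ∫⁻ x, ∫⁻ s in S, ∫⁻ t in T, g x * g (x + s) * g (x + t) * g (x + s + t) ∂μ ∂μ ∂μ := by
  refine lintegral_congr fun x ↦ ?_
  simp only [setLIntegral_preimage_sub_right (μ := μ), add_sub_cancel_left]
  rw [← lintegral_const_mul' _ _ (hg x)]
  refine lintegral_congr fun s ↦ ?_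
  rw [← lintegral_const_mul' _ _ (hg _), ← lintegral_const_mul' _ _ (hg _)]
  refine lintegral_congr fun t ↦ ?_
  rw [add_left_comm, ← add_assoc]
  ring

end Parallelogram

theorem enorm_integral_mul_le_lintegral {𝕜 α : Type*} [RCLike 𝕜] [MeasurableSpace α]
    {μ : Measure α} (f F : α → 𝕜) : ‖∫ x, f x * F x ∂μ‖ₑ ≤ ∫⁻ x, ‖f x‖ₑ * ‖F x‖ₑ ∂μ := by
  simpa only [enorm_mul] using enorm_integral_le_lintegral_enorm (fun x ↦ f x * F x)

theorem enorm_integral_setIntegral_setIntegral_le {𝕜 : Type*} [RCLike 𝕜] (b : ℝ → 𝕜)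
    (U V : ℝ → Set ℝ) :
    ‖∫ x, b x * ∫ y in U x, b y * ∫ z in V x, b z * b (y - x + z)‖ₑ
      ≤ ∫⁻ x, ‖b x‖ₑ * ∫⁻ y in U x, ‖b y‖ₑ * ∫⁻ z in V x, ‖b z‖ₑ * ‖b (y - x + z)‖ₑ := by
  refine (enorm_integral_mul_le_lintegral _ _).trans ?_
  gcongr with x
  refine (enorm_integral_mul_le_lintegral _ _).trans ?_
  gcongr with y
  exact enorm_integral_mul_le_lintegral _ _

theorem MeasureTheory.MemLp.ofReal_integral_pow_eq_lintegral_enorm_pow {α : Type*}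
    [MeasurableSpace α] {μ : Measure α} {f : α → ℝ} {n : ℕ} (hf : MemLp f n μ) (hn : Even n) (hn₀ : n ≠ 0) :
    ENNReal.ofReal (∫ x, f x ^ n ∂μ) = ∫⁻ x, ‖f x‖ₑ ^ n ∂μ := by
  have hint : Integrable (fun x ↦ f x ^ n) μ := by
    simpa [hn.pow_abs] using hf.integrable_norm_pow hn₀
  simpa [hn.pow_abs] using ofReal_integral_norm_eq_lintegral_enorm hint

theorem Real.volume_abs_preimage_Icc_le (a b : ℝ) :
    volume (abs ⁻¹' Icc a b) ≤ 2 * ENNReal.ofReal (b - a) := by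
  have hsub : abs ⁻¹' Icc a b ⊆ Icc (-b) (-a) ∪ Icc a b := by
    intro s ⟨ha, hb⟩
    rcases abs_cases s with ⟨hs, -⟩ | ⟨hs, -⟩
    · exact Or.inr ⟨hs ▸ ha, hs ▸ hb⟩
    · exact Or.inl ⟨by linarith, by linarith⟩
  calc volume (abs ⁻¹' Icc a b) ≤ volume (Icc (-b) (-a)) + volume (Icc a b) :=
        (measure_mono hsub).trans (measure_union_le _ _)
    _ = 2 * ENNReal.ofReal (b - a) := by
        rw [Real.volume_Icc, Real.volume_Icc, neg_sub_neg, two_mul]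

def dyadicShell (k : ℕ) : Set ℝ := abs ⁻¹' Icc (2 ^ (-(k : ℝ))) (2 ^ (-(k : ℝ) + 1))

theorem volume_dyadicShell_le (k : ℕ) :
    volume (dyadicShell k) ≤ 2 * ENNReal.ofReal (2 ^ (-(k : ℝ))) :=
  (Real.volume_abs_preimage_Icc_le _ _).trans_eq <| by
    rw [Real.rpow_add_one two_ne_zero, mul_two, add_sub_cancel_right]

/-- Lemma 4.5: the dyadically localized quadrilinear integral estimate
`∫ b(ρ₂) ∫_{|ρ₁-ρ₂|∼2^{-i}} b(ρ₁) ∫_{|ρ₃-ρ₂|∼2^{-j}} b(ρ₃) b(ρ₁-ρ₂+ρ₃) ≲ 2^{-(i+j)} ‖b‖₄⁴`. -/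
theorem dyadic_quadrilinear_estimate :
    ∃ C : ℝ, 0 < C ∧
      ∀ b : ℝ → ℝ, Measurable b → (∀ x, 0 ≤ b x) → MemLp b 4 volume →
      ∀ i j : ℕ,
        (∫ ρ₂ : ℝ, b ρ₂ *
            ∫ ρ₁ in {ρ₁ : ℝ | (2 : ℝ) ^ (-(i : ℝ)) ≤ |ρ₁ - ρ₂| ∧
                |ρ₁ - ρ₂| ≤ (2 : ℝ) ^ (-(i : ℝ) + 1)},
              b ρ₁ *
                ∫ ρ₃ in {ρ₃ : ℝ | (2 : ℝ) ^ (-(j : ℝ)) ≤ |ρ₃ - ρ₂| ∧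
                    |ρ₃ - ρ₂| ≤ (2 : ℝ) ^ (-(j : ℝ) + 1)},
                  b ρ₃ * b (ρ₁ - ρ₂ + ρ₃))
          ≤ C * (2 : ℝ) ^ (-((i : ℝ) + (j : ℝ))) * ∫ ρ : ℝ, b ρ ^ 4 := by
  refine ⟨4, by norm_num, fun b hb _ hb4 i j ↦ ?_⟩
  refine (le_abs_self _).trans ?_
  rw [← Real.norm_eq_abs, ← toReal_enorm]
  refine ENNReal.toReal_le_of_le_ofReal (by positivity) ?_
  calc _ ≤ _ := enorm_integral_setIntegral_setIntegral_le b _ _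
    -- the annuli of the statement are `(· - ρ₂) ⁻¹' dyadicShell i` up to unfolding
    _ = _ := lintegral_mul_setLIntegral_preimage_sub (S := dyadicShell i) (T := dyadicShell j)
          fun _ ↦ enorm_ne_top
    _ ≤ _ := lintegral_setLIntegral_setLIntegral_parallelogram_le hb.enorm _ _
    _ ≤ 2 * ENNReal.ofReal (2 ^ (-(i : ℝ))) * (2 * ENNReal.ofReal (2 ^ (-(j : ℝ)))) *
          ENNReal.ofReal (∫ x, b x ^ 4) := by
        rw [hb4.ofReal_integral_pow_eq_lintegral_enorm_pow (n := 4) (by decide) (by norm_num)]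
        gcongr <;> exact volume_dyadicShell_le _
    _ = _ := by
        rw [ENNReal.ofReal_mul (by positivity), ENNReal.ofReal_mul (by norm_num), neg_add,
          Real.rpow_add two_pos, ENNReal.ofReal_mul (by positivity), ENNReal.ofReal_ofNat]
        ring
end
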